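/- arXiv:1102.5452 — 4 statements merged into one kernel-verified Lean document; each statement's English description precedes it below -/
import Mathlib

section
/- Let A and B be non-empty sets over a complete residuated lattice 𝓛 and let φ:A×B→L be a fuzzy relation. Then the following conditions are equivalent: (i) φ is a uniform fuzzy relation; (ii) φ⁻¹ is a uniform fuzzy relation; (iii) φ is a surjective 𝓛-function and φ∘φ⁻¹∘φ = φ; (iv) φ is a surjective 𝓛-function and E_A^φ = φ∘φ⁻¹; (v) φ is a surjective 𝓛-function and E_B^φ = φ⁻¹∘φ; (vi) φ is an 𝓛-function and for all ψ∈CR(φ), a∈A and b∈B, ψ is E_B^φ-surjective and φ(a,b)=E_B^φ(ψ(a),b); (vii) φ is an 𝓛-function and for all ψ∈CR(φ) and a₁,a₂∈A, ψ is E_B^φ-surjective and φ(a₁,ψ(a₂))=E_A^φ(a₁,a₂). -/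
universe u

/-- A complete residuated lattice: a complete lattice with a commutative monoid
structure whose unit is the top element, together with a residuum operation
forming an adjoint pair with the multiplication. -/
class CompleteResiduatedLattice (L : Type*) extends CompleteLattice L, CommMonoid L where
  /-- the residuum operation `→` -/
  res : L → L → L
  /-- the adjunction property -/
  adjunction : ∀ x y z : L, x * y ≤ z ↔ x ≤ res y z
  /-- the multiplicative unit `1` is the greatest element -/
  one_eq_top : (1 : L) = ⊤

namespace FuzzyAutomataBisim

/-- A fuzzy automaton over `L` and alphabet `X`, with state set `A`. -/
structure FuzzyAutomaton (L : Type*) [CompleteResiduatedLattice L] (X A : Type*) where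
  δ : A → X → A → L
  σ : A → L
  τ : A → L

variable {L X A B C : Type*} [CompleteResiduatedLattice L]

/-- biresiduum `x ↔ y = (x → y) ⊓ (y → x)` -/
def bires (x y : L) : L :=
  CompleteResiduatedLattice.res x y ⊓ CompleteResiduatedLattice.res y x

/-- inverse of a fuzzy relation -/
def inv (φ : A → B → L) : B → A → L := fun b a => φ a b

/-- composition of fuzzy relations -/
def rcomp (φ : A → B → L) (ψ : B → C → L) : A → C → L := fun a c => ⨆ b, φ a b * ψ b c

/-- composition of a fuzzy set with a fuzzy relation -/
def scomp (f : A → L) (φ : A → B → L) : B → L := fun b => ⨆ a, f a * φ a b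

/-- composition of a fuzzy relation with a fuzzy set -/
def rscomp (φ : A → B → L) (g : B → L) : A → L := fun a => ⨆ b, φ a b * g b

/-- degree of overlapping of two fuzzy sets -/
def sdot (f g : A → L) : L := ⨆ a, f a * g a

/-- kernel `E_A^φ` of a fuzzy relation -/
def ker (φ : A → B → L) : A → A → L := fun a₁ a₂ => ⨅ b, bires (φ a₁ b) (φ a₂ b)

/-- co-kernel `E_B^φ` of a fuzzy relation -/
def coker (φ : A → B → L) : B → B → L := fun b₁ b₂ => ⨅ a, bires (φ a b₁) (φ a b₂)

/-- `φ` is an `L`-function -/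
def IsLFun (φ : A → B → L) : Prop := ∀ a, ∃ b, φ a b = 1

/-- `φ` is surjective, i.e. `φ⁻¹` is an `L`-function -/
def IsSurj (φ : A → B → L) : Prop := ∀ b, ∃ a, φ a b = 1

/-- `φ` is a partial fuzzy function: `φ ∘ φ⁻¹ ∘ φ ≤ φ` -/
def IsPFF (φ : A → B → L) : Prop := rcomp (rcomp φ (inv φ)) φ ≤ φ

/-- `φ` is a uniform fuzzy relation: a partial fuzzy function that is a
surjective `L`-function -/
def IsUniform (φ : A → B → L) : Prop := IsPFF φ ∧ IsLFun φ ∧ IsSurj φ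

/-- the set of crisp descriptions of `φ` -/
def CR (φ : A → B → L) : Set (A → B) := {ψ | ∀ a, φ a (ψ a) = 1}

/-- `ψ : A → B` is `F`-surjective -/
def SurjMod (F : B → B → L) (ψ : A → B) : Prop := ∀ b, ∃ a, F (ψ a) b = 1

/-- fuzzy equivalence relation -/
structure IsFuzzyEquiv (E : A → A → L) : Prop where
  refl : ∀ a, E a a = 1
  symm : ∀ a b, E a b = E b a
  trans : ∀ a b c, E a b * E b c ≤ E a c

/-- fuzzy equality -/
def IsFuzzyEquality (E : A → A → L) : Prop :=
  IsFuzzyEquiv E ∧ ∀ a b, E a b = 1 → a = b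

/-- the factor set `A/E = {E_a : a ∈ A}` -/
abbrev FactorSet (E : A → A → L) := {f : A → L // ∃ a, E a = f}

/-- the class `E_a` as an element of `A/E` -/
def toClass (E : A → A → L) (a : A) : FactorSet E := ⟨E a, a, rfl⟩

/-- a chosen representative of a class -/
noncomputable def rep {E : A → A → L} (c : FactorSet E) : A := c.2.choose

/-- the fuzzy relation `Ẽ` on `A/E` -/
noncomputable def tildeRel (E : A → A → L) : FactorSet E → FactorSet E → L :=
  fun c c' => E (rep c) (rep c')

open Classical in
/-- a chosen crisp description of `φ` -/
noncomputable def crispDesc [Nonempty B] (φ : A → B → L) : A → B :=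
  fun a => if h : ∃ b, φ a b = 1 then h.choose else Classical.arbitrary B

/-- the induced map `φ̃ : A/E_A^φ → B/E_B^φ`, `φ̃(E_a) = F_{ψ(a)}` -/
noncomputable def tilde [Nonempty B] (φ : A → B → L) :
    FactorSet (ker φ) → FactorSet (coker φ) :=
  fun c => toClass (coker φ) (crispDesc φ (rep c))

/-- the fuzzy transition relation `δ_x` -/
def FuzzyAutomaton.δx (M : FuzzyAutomaton L X A) (x : X) : A → A → L := fun a b => M.δ a x b

open Classical in
/-- transitions extended to words -/
noncomputable def deltaWord (M : FuzzyAutomaton L X A) : List X → A → A → L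
  | [] => fun a b => if a = b then (1 : L) else ⊥
  | x :: u => rcomp (M.δx x) (deltaWord M u)

/-- the fuzzy language recognized by `M` : `L(M)(u) = σ ∘ δ_u ∘ τ` -/
noncomputable def lang (M : FuzzyAutomaton L X A) (u : List X) : L :=
  sdot (scomp M.σ (deltaWord M u)) M.τ

/-- forward simulation -/
def IsForwardSim (MA : FuzzyAutomaton L X A) (MB : FuzzyAutomaton L X B)
    (φ : A → B → L) : Prop :=
  MA.σ ≤ scomp MB.σ (inv φ) ∧
  (∀ x, rcomp (inv φ) (MA.δx x) ≤ rcomp (MB.δx x) (inv φ)) ∧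
  rscomp (inv φ) MA.τ ≤ MB.τ

/-- backward simulation -/
def IsBackwardSim (MA : FuzzyAutomaton L X A) (MB : FuzzyAutomaton L X B)
    (φ : A → B → L) : Prop :=
  scomp MA.σ φ ≤ MB.σ ∧
  (∀ x, rcomp (MA.δx x) φ ≤ rcomp φ (MB.δx x)) ∧
  MA.τ ≤ rscomp φ MB.τ

/-- forward bisimulation -/
def IsForwardBisim (MA : FuzzyAutomaton L X A) (MB : FuzzyAutomaton L X B)
    (φ : A → B → L) : Prop :=
  IsForwardSim MA MB φ ∧ IsForwardSim MB MA (inv φ)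

/-- backward bisimulation -/
def IsBackwardBisim (MA : FuzzyAutomaton L X A) (MB : FuzzyAutomaton L X B)
    (φ : A → B → L) : Prop :=
  IsBackwardSim MA MB φ ∧ IsBackwardSim MB MA (inv φ)

/-- backward-forward bisimulation -/
def IsBFBisim (MA : FuzzyAutomaton L X A) (MB : FuzzyAutomaton L X B)
    (φ : A → B → L) : Prop :=
  IsBackwardSim MA MB φ ∧ IsForwardSim MB MA (inv φ)

/-- forward-backward bisimulation -/
def IsFBBisim (MA : FuzzyAutomaton L X A) (MB : FuzzyAutomaton L X B)
    (φ : A → B → L) : Prop :=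
  IsForwardSim MA MB φ ∧ IsBackwardSim MB MA (inv φ)

/-- isomorphism of fuzzy automata -/
def IsIso (MA : FuzzyAutomaton L X A) (MB : FuzzyAutomaton L X B) (h : A → B) : Prop :=
  Function.Bijective h ∧
  (∀ (a₁ : A) (x : X) (a₂ : A), MA.δ a₁ x a₂ = MB.δ (h a₁) x (h a₂)) ∧
  (∀ a, MA.σ a = MB.σ (h a)) ∧
  (∀ a, MA.τ a = MB.τ (h a))

/-- the factor fuzzy automaton `𝓐/E` -/
noncomputable def factorAut (M : FuzzyAutomaton L X A) (E : A → A → L) :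
    FuzzyAutomaton L X (FactorSet E) where
  δ := fun c x c' => rcomp (rcomp E (M.δx x)) E (rep c) (rep c')
  σ := fun c => scomp M.σ E (rep c)
  τ := fun c => rscomp E M.τ (rep c)

/-- the natural fuzzy relation `φ(a₁, E_{a₂}) = E(a₁,a₂)` between `A` and `A/E` -/
def natRel (E : A → A → L) : A → FactorSet E → L := fun a c => c.1 a

/-- the fuzzy relation `G/E` on `A/E` -/
noncomputable def quotRel (E G : A → A → L) : FactorSet E → FactorSet E → L :=
  fun c c' => G (rep c) (rep c')

/-- the fuzzy relation `φ(a₁, E_{a₂}) = G(a₁,a₂)` between `A` and `A/E` -/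
noncomputable def quotNatRel (E G : A → A → L) : A → FactorSet E → L :=
  fun a c => G a (rep c)

/-- UFB-equivalence of fuzzy automata -/
def UFBEquiv (MA : FuzzyAutomaton L X A) (MB : FuzzyAutomaton L X B) : Prop :=
  ∃ φ : A → B → L, IsUniform φ ∧ IsForwardBisim MA MB φ

section AuxLemmas

open CompleteResiduatedLattice

variable {L' : Type*} [CompleteResiduatedLattice L']

private lemma adj {x y z : L'} : x * y ≤ z ↔ x ≤ res y z := adjunction x y z

private lemma le_one' (x : L') : x ≤ 1 := by
  rw [one_eq_top (L := L')]; exact le_top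

private lemma mul_le_mul'' {a b c d : L'} (h1 : a ≤ b) (h2 : c ≤ d) : a * c ≤ b * d := by
  have h3 : a * c ≤ b * c := adj.mpr (h1.trans (adj.mp le_rfl))
  have h4 : c * b ≤ d * b := adj.mpr (h2.trans (adj.mp le_rfl))
  calc a * c ≤ b * c := h3
    _ = c * b := mul_comm _ _
    _ ≤ d * b := h4
    _ = b * d := mul_comm _ _

private lemma mul_res_le {x y : L'} : res x y * x ≤ y := adj.mpr le_rfl

private lemma res_eq_one_of_le {x y : L'} (h : x ≤ y) : res x y = 1 := by
  have h1 : (1 : L') ≤ res x y := adj.mp (by rwa [one_mul])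
  exact le_antisymm (le_one' _) h1

private lemma le_of_res_eq_one {x y : L'} (h : res x y = 1) : x ≤ y := by
  have := mul_res_le (x := x) (y := y)
  rwa [h, one_mul] at this

private lemma res_one_left {y : L'} : res (1 : L') y = y := by
  apply le_antisymm
  · have := mul_res_le (x := (1 : L')) (y := y); rwa [mul_one] at this
  · exact adj.mp (by rw [mul_one])

private lemma bires_le_res {x y : L'} : bires x y ≤ res x y := inf_le_left
private lemma bires_le_res' {x y : L'} : bires x y ≤ res y x := inf_le_right

private lemma bires_symm (x y : L') : bires x y = bires y x := inf_comm _ _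

private lemma bires_refl (x : L') : bires x x = 1 := by
  simp [bires, res_eq_one_of_le le_rfl]

private lemma bires_eq_one_iff {x y : L'} : bires x y = 1 ↔ x = y := by
  constructor
  · intro h
    have h1 : res x y = 1 := le_antisymm (le_one' _) (h ▸ bires_le_res)
    have h2 : res y x = 1 := le_antisymm (le_one' _) (h ▸ bires_le_res')
    exact le_antisymm (le_of_res_eq_one h1) (le_of_res_eq_one h2)
  · rintro rfl; exact bires_refl x

private lemma res_trans {x y z : L'} : res x y * res y z ≤ res x z := by
  apply adj.mp
  calc res x y * res y z * x = res y z * (res x y * x) := by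
        rw [mul_comm (res x y) (res y z), mul_assoc]
    _ ≤ res y z * y := mul_le_mul'' le_rfl mul_res_le
    _ ≤ z := mul_res_le

private lemma bires_trans {x y z : L'} : bires x y * bires y z ≤ bires x z :=
  le_inf ((mul_le_mul'' bires_le_res bires_le_res).trans res_trans)
    (le_of_eq (mul_comm _ _) |>.trans
      ((mul_le_mul'' bires_le_res' bires_le_res').trans res_trans))

private lemma mul_rot {x y z : L'} : x * y * z = z * y * x := by
  rw [mul_comm (x * y) z, mul_comm x y, ← mul_assoc]

private lemma iSup_mul_le {ι : Sort*} {f : ι → L'} {x z : L'}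
    (h : ∀ i, f i * x ≤ z) : (⨆ i, f i) * x ≤ z :=
  adj.mpr (iSup_le fun i => adj.mp (h i))

end AuxLemmas

section KerLemmas

open CompleteResiduatedLattice

private lemma ker_refl (φ : A → B → L) (a : A) : ker φ a a = 1 :=
  le_antisymm (le_one' _) (le_iInf fun _ => by rw [bires_refl])

private lemma ker_symm (φ : A → B → L) (a b : A) : ker φ a b = ker φ b a :=
  iInf_congr fun x => bires_symm _ _

private lemma ker_trans (φ : A → B → L) (a b c : A) :
    ker φ a b * ker φ b c ≤ ker φ a c :=
  le_iInf fun x => (mul_le_mul'' (iInf_le _ x) (iInf_le _ x)).trans bires_trans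

private lemma coker_eq_ker_inv (φ : A → B → L) : coker φ = ker (inv φ) := rfl

private lemma coker_symm (φ : A → B → L) (b₁ b₂ : B) :
    coker φ b₁ b₂ = coker φ b₂ b₁ := ker_symm (inv φ) b₁ b₂

private lemma coker_trans (φ : A → B → L) (b₁ b₂ b₃ : B) :
    coker φ b₁ b₂ * coker φ b₂ b₃ ≤ coker φ b₁ b₃ := ker_trans (inv φ) b₁ b₂ b₃

private lemma coker_eq_one {φ : A → B → L} {b₁ b₂ : B} (h : coker φ b₁ b₂ = 1) :
    ∀ a, φ a b₁ = φ a b₂ := fun a =>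
  bires_eq_one_iff.mp (le_antisymm (le_one' _) (h ▸ iInf_le _ a))

private lemma isPFF_iff {φ : A → B → L} :
    IsPFF φ ↔ ∀ a a' b b', φ a b' * φ a' b' * φ a' b ≤ φ a b := by
  constructor
  · intro h a a' b b'
    refine le_trans ?_ (h a b)
    calc φ a b' * φ a' b' * φ a' b
        ≤ (⨆ b'', φ a b'' * φ a' b'') * φ a' b :=
          mul_le_mul'' (le_iSup (fun b'' => φ a b'' * φ a' b'') b') le_rfl
      _ ≤ ⨆ a'', (⨆ b'', φ a b'' * φ a'' b'') * φ a'' b :=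
          le_iSup (fun a'' => (⨆ b'', φ a b'' * φ a'' b'') * φ a'' b) a'
  · intro h a b
    exact iSup_le fun a' => iSup_mul_le fun b' => h a a' b b'

private lemma isPFF_inv_iff {φ : A → B → L} : IsPFF (inv φ) ↔ IsPFF φ := by
  rw [isPFF_iff, isPFF_iff]
  constructor
  · intro h a a' b b'
    have := h b b' a a'
    simp only [inv] at this
    calc φ a b' * φ a' b' * φ a' b = φ a' b * φ a' b' * φ a b' := mul_rot
      _ ≤ φ a b := this
  · intro h b b' a a'
    show φ a' b * φ a' b' * φ a b' ≤ φ a b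
    have := h a a' b b'
    calc φ a' b * φ a' b' * φ a b' = φ a b' * φ a' b' * φ a' b := mul_rot
      _ ≤ φ a b := this

private lemma pff_comp_le_ker {φ : A → B → L} (h : IsPFF φ) :
    rcomp φ (inv φ) ≤ ker φ := by
  rw [isPFF_iff] at h
  intro a₁ a₂
  refine iSup_le fun b' => le_iInf fun b => le_inf (adj.mp ?_) (adj.mp ?_)
  · show φ a₁ b' * φ a₂ b' * φ a₁ b ≤ φ a₂ b
    rw [mul_comm (φ a₁ b') (φ a₂ b')]
    exact h a₂ a₁ b b'
  · show φ a₁ b' * φ a₂ b' * φ a₂ b ≤ φ a₁ b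
    exact h a₁ a₂ b b'

private lemma comp_le_ker_pff {φ : A → B → L} (h : rcomp φ (inv φ) ≤ ker φ) :
    IsPFF φ := by
  rw [isPFF_iff]
  intro a a' b b'
  have h1 : φ a b' * φ a' b' ≤ ker φ a a' :=
    le_trans (le_iSup (fun b'' => φ a b'' * φ a' b'') b') (h a a')
  have h2 : ker φ a a' ≤ res (φ a' b) (φ a b) := (iInf_le _ b).trans bires_le_res'
  calc φ a b' * φ a' b' * φ a' b ≤ res (φ a' b) (φ a b) * φ a' b :=
        mul_le_mul'' (h1.trans h2) le_rfl
    _ ≤ φ a b := mul_res_le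

private lemma ker_le_comp {φ : A → B → L} (h : IsLFun φ) :
    ker φ ≤ rcomp φ (inv φ) := by
  intro a₁ a₂
  obtain ⟨b, hb⟩ := h a₂
  have h1 : ker φ a₁ a₂ ≤ φ a₁ b := by
    refine le_trans ((iInf_le _ b).trans bires_le_res') ?_
    rw [hb, res_one_left]
  calc ker φ a₁ a₂ ≤ φ a₁ b * φ a₂ b := by rw [hb, mul_one]; exact h1
    _ ≤ ⨆ b', φ a₁ b' * φ a₂ b' := le_iSup (fun b' => φ a₁ b' * φ a₂ b') b
    _ = rcomp φ (inv φ) a₁ a₂ := rfl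

private lemma lfun_le_pff {φ : A → B → L} (h : IsLFun φ) :
    φ ≤ rcomp (rcomp φ (inv φ)) φ := by
  intro a b
  obtain ⟨b₀, hb₀⟩ := h a
  have : φ a b = (φ a b₀ * φ a b₀) * φ a b := by rw [hb₀, one_mul, one_mul]
  rw [this]
  calc (φ a b₀ * φ a b₀) * φ a b
      ≤ (⨆ b', φ a b' * φ a b') * φ a b :=
        mul_le_mul'' (le_iSup (fun b' => φ a b' * φ a b') b₀) le_rfl
    _ ≤ ⨆ a', (⨆ b', φ a b' * φ a' b') * φ a' b :=
        le_iSup (fun a' => (⨆ b', φ a b' * φ a' b') * φ a' b) a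

private lemma exists_crisp {φ : A → B → L} (h : IsLFun φ) : ∃ ψ, ψ ∈ CR φ :=
  ⟨fun a => (h a).choose, fun a => (h a).choose_spec⟩

private lemma uniform_surjMod {φ : A → B → L} (hP : IsPFF φ) (hs : IsSurj φ)
    {ψ : A → B} (hψ : ψ ∈ CR φ) : SurjMod (coker φ) ψ := by
  rw [isPFF_iff] at hP
  intro b
  obtain ⟨a, hab⟩ := hs b
  refine ⟨a, le_antisymm (le_one' _) (le_iInf fun a' => ?_)⟩
  have h1 : φ a' (ψ a) ≤ φ a' b := by
    have := hP a' a b (ψ a); rwa [hψ a, hab, mul_one, mul_one] at this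
  have h2 : φ a' b ≤ φ a' (ψ a) := by
    have := hP a' a (ψ a) b; rwa [hab, hψ a, mul_one, mul_one] at this
  rw [bires_eq_one_iff.mpr (le_antisymm h1 h2)]

end KerLemmas

/-- Theorem on uniform fuzzy relations -/
theorem uniform_tfae {L A B : Type*} [CompleteResiduatedLattice L]
    [Nonempty A] [Nonempty B] (φ : A → B → L) :
    List.TFAE
      [ IsUniform φ,
        IsUniform (inv φ),
        (IsLFun φ ∧ IsSurj φ) ∧ rcomp (rcomp φ (inv φ)) φ = φ,
        (IsLFun φ ∧ IsSurj φ) ∧ ker φ = rcomp φ (inv φ),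
        (IsLFun φ ∧ IsSurj φ) ∧ coker φ = rcomp (inv φ) φ,
        IsLFun φ ∧ ∀ ψ ∈ CR φ, SurjMod (coker φ) ψ ∧ ∀ a b, φ a b = coker φ (ψ a) b,
        IsLFun φ ∧ ∀ ψ ∈ CR φ, SurjMod (coker φ) ψ ∧
          ∀ a₁ a₂, φ a₁ (ψ a₂) = ker φ a₁ a₂ ] := by
  tfae_have 1 ↔ 2 := by
    constructor
    · rintro ⟨hp, hl, hs⟩
      exact ⟨isPFF_inv_iff.mpr hp, hs, hl⟩
    · rintro ⟨hp, hl, hs⟩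
      exact ⟨isPFF_inv_iff.mp hp, hs, hl⟩
  tfae_have 1 ↔ 3 := by
    constructor
    · rintro ⟨hp, hl, hs⟩
      exact ⟨⟨hl, hs⟩, le_antisymm hp (lfun_le_pff hl)⟩
    · rintro ⟨⟨hl, hs⟩, he⟩
      exact ⟨he.le, hl, hs⟩
  tfae_have 1 ↔ 4 := by
    constructor
    · rintro ⟨hp, hl, hs⟩
      exact ⟨⟨hl, hs⟩, le_antisymm (ker_le_comp hl) (pff_comp_le_ker hp)⟩
    · rintro ⟨⟨hl, hs⟩, he⟩
      exact ⟨comp_le_ker_pff he.ge, hl, hs⟩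
  tfae_have 2 ↔ 5 := by
    constructor
    · rintro ⟨hp, hl, hs⟩
      exact ⟨⟨hs, hl⟩, le_antisymm (ker_le_comp (φ := inv φ) hl) (pff_comp_le_ker hp)⟩
    · rintro ⟨⟨hl, hs⟩, he⟩
      exact ⟨comp_le_ker_pff (φ := inv φ) he.ge, hs, hl⟩
  tfae_have 1 → 6 := by
    rintro ⟨hp, hl, hs⟩
    refine ⟨hl, fun ψ hψ => ⟨uniform_surjMod hp hs hψ, fun a b => ?_⟩⟩
    have hP := isPFF_iff.mp hp
    apply le_antisymm
    · refine le_iInf fun a' => le_inf (adj.mp ?_) (adj.mp ?_)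
      · have h := hP a' a b (ψ a)
        rw [hψ a, mul_one] at h
        calc φ a b * φ a' (ψ a) = φ a' (ψ a) * φ a b := mul_comm _ _
          _ ≤ φ a' b := h
      · have h := hP a' a (ψ a) b
        rw [hψ a, mul_one] at h
        calc φ a b * φ a' b = φ a' b * φ a b := mul_comm _ _
          _ ≤ φ a' (ψ a) := h
    · refine le_trans (iInf_le _ a) (le_trans bires_le_res ?_)
      rw [hψ a, res_one_left]
  tfae_have 6 → 1 := by
    rintro ⟨hl, h6⟩
    obtain ⟨ψ, hψ⟩ := exists_crisp hl
    obtain ⟨hsm, he⟩ := h6 ψ hψ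
    have hsurj : IsSurj φ := fun b => by
      obtain ⟨a, ha⟩ := hsm b
      exact ⟨a, (he a b).trans ha⟩
    refine ⟨?_, hl, hsurj⟩
    rw [isPFF_iff]
    intro a a' b b'
    rw [he a b', he a' b', he a' b, he a b]
    calc coker φ (ψ a) b' * coker φ (ψ a') b' * coker φ (ψ a') b
        = coker φ (ψ a) b' * coker φ b' (ψ a') * coker φ (ψ a') b := by
          rw [coker_symm φ (ψ a') b']
      _ ≤ coker φ (ψ a) (ψ a') * coker φ (ψ a') b :=
          mul_le_mul'' (coker_trans φ _ _ _) le_rfl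
      _ ≤ coker φ (ψ a) b := coker_trans φ _ _ _
  tfae_have 1 → 7 := by
    rintro ⟨hp, hl, hs⟩
    refine ⟨hl, fun ψ hψ => ⟨uniform_surjMod hp hs hψ, fun a₁ a₂ => ?_⟩⟩
    have hP := isPFF_iff.mp hp
    apply le_antisymm
    · refine le_iInf fun b => le_inf (adj.mp ?_) (adj.mp ?_)
      · have h := hP a₂ a₁ b (ψ a₂)
        rwa [hψ a₂, one_mul] at h
      · have h := hP a₁ a₂ b (ψ a₂)
        rwa [hψ a₂, mul_one] at h
    · refine le_trans (iInf_le _ (ψ a₂)) (le_trans bires_le_res' ?_)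
      rw [hψ a₂, res_one_left]
  tfae_have 7 → 1 := by
    rintro ⟨hl, h7⟩
    obtain ⟨ψ, hψ⟩ := exists_crisp hl
    obtain ⟨hsm, he⟩ := h7 ψ hψ
    have key : ∀ b a₀, coker φ (ψ a₀) b = 1 → ∀ x, φ x b = ker φ x a₀ := by
      intro b a₀ h x
      rw [← coker_eq_one h x]
      exact he x a₀
    have hsurj : IsSurj φ := fun b => by
      obtain ⟨a, ha⟩ := hsm b
      exact ⟨a, by rw [key b a ha a, ker_refl]⟩
    refine ⟨?_, hl, hsurj⟩
    rw [isPFF_iff]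
    intro a a' b b'
    obtain ⟨a₂, ha₂⟩ := hsm b'
    obtain ⟨a₃, ha₃⟩ := hsm b
    rw [key b' a₂ ha₂ a, key b' a₂ ha₂ a', key b a₃ ha₃ a', key b a₃ ha₃ a]
    calc ker φ a a₂ * ker φ a' a₂ * ker φ a' a₃
        = ker φ a a₂ * ker φ a₂ a' * ker φ a' a₃ := by rw [ker_symm φ a' a₂]
      _ ≤ ker φ a a' * ker φ a' a₃ := mul_le_mul'' (ker_trans φ _ _ _) le_rfl
      _ ≤ ker φ a a₃ := ker_trans φ _ _ _
  tfae_finish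


end FuzzyAutomataBisim
end

section
/- Let A and B be non-empty sets over a complete residuated lattice 𝓛 and let φ₁,φ₂:A×B→L be uniform fuzzy relations. Then the following conditions are equivalent: (i) φ₁ ≤ φ₂; (ii) φ₁⁻¹ ≤ φ₂⁻¹; (iii) CR(φ₁) ⊆ CR(φ₂) and E_A^{φ₁} ≤ E_A^{φ₂}; (iv) CR(φ₁) ⊆ CR(φ₂) and E_B^{φ₁} ≤ E_B^{φ₂}. -/
universe u

namespace FuzzyAutomataBisim

variable {L X A B C : Type*} [CompleteResiduatedLattice L]

section Aux

open CompleteResiduatedLattice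

lemma aux_le_one (x : L) : x ≤ (1 : L) := one_eq_top (L := L) ▸ le_top

lemma aux_mul_le_mul {a b c d : L} (hab : a ≤ b) (hcd : c ≤ d) : a * c ≤ b * d := by
  have h1 : b ≤ res c (b * c) := (adjunction b c (b * c)).mp le_rfl
  have h2 : a * c ≤ b * c := (adjunction a c (b * c)).mpr (hab.trans h1)
  have h3 : d ≤ res b (b * d) := (adjunction d b (b * d)).mp (by rw [mul_comm])
  have h4 : c * b ≤ b * d := (adjunction c b (b * d)).mpr (hcd.trans h3)
  exact h2.trans (by rw [mul_comm] at h4; exact h4)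

lemma aux_le_of_res_one {x z : L} (h : x ≤ res 1 z) : x ≤ z := by
  have := (adjunction x 1 z).mpr h
  simpa using this

lemma aux_pff_elem {φ : A → B → L} (h : IsPFF φ) (a a' : A) (b c : B) :
    φ a b * φ a' b * φ a' c ≤ φ a c := by
  have h1 : φ a b * φ a' b ≤ rcomp φ (inv φ) a a' :=
    le_iSup (fun b => φ a b * inv φ b a') b
  have h2 : rcomp φ (inv φ) a a' * φ a' c ≤ rcomp (rcomp φ (inv φ)) φ a c :=
    le_iSup (fun a' => rcomp φ (inv φ) a a' * φ a' c) a'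
  exact (aux_mul_le_mul h1 le_rfl).trans (h2.trans (h _ _))

lemma aux_comp_le_ker {φ : A → B → L} (h : IsPFF φ) (a a' : A) :
    (⨆ b, φ a b * φ a' b) ≤ ker φ a a' := by
  refine iSup_le fun b => le_iInf fun c => le_inf ?_ ?_
  · exact (adjunction _ _ _).mp (by
      have := aux_pff_elem h a' a b c
      calc φ a b * φ a' b * φ a c = φ a' b * φ a b * φ a c := by simp [mul_comm, mul_assoc, mul_left_comm]
        _ ≤ φ a' c := this)
  · exact (adjunction _ _ _).mp (aux_pff_elem h a a' b c)

lemma aux_comp_le_coker {φ : A → B → L} (h : IsPFF φ) (b b' : B) :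
    (⨆ a, φ a b * φ a b') ≤ coker φ b b' := by
  refine iSup_le fun a => le_iInf fun a' => le_inf ?_ ?_
  · exact (adjunction _ _ _).mp (by
      have := aux_pff_elem h a' a b b'
      calc φ a b * φ a b' * φ a' b = φ a' b * φ a b * φ a b' := by simp [mul_comm, mul_assoc, mul_left_comm]
        _ ≤ φ a' b' := this)
  · exact (adjunction _ _ _).mp (by
      have := aux_pff_elem h a' a b' b
      calc φ a b * φ a b' * φ a' b' = φ a' b' * φ a b' * φ a b := by simp [mul_comm, mul_assoc, mul_left_comm]
        _ ≤ φ a' b := this)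

lemma aux_ker_le_comp {φ : A → B → L} (h : IsLFun φ) (a a' : A) :
    ker φ a a' ≤ ⨆ b, φ a b * φ a' b := by
  obtain ⟨b, hb⟩ := h a'
  have h1 : ker φ a a' ≤ res (φ a' b) (φ a b) :=
    (iInf_le _ b).trans inf_le_right
  rw [hb] at h1
  have h2 : ker φ a a' ≤ φ a b := aux_le_of_res_one h1
  calc ker φ a a' ≤ φ a b := h2
    _ = φ a b * φ a' b := by rw [hb, mul_one]
    _ ≤ ⨆ b, φ a b * φ a' b := le_iSup (fun b => φ a b * φ a' b) b

lemma aux_coker_le_comp {φ : A → B → L} (h : IsSurj φ) (b b' : B) :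
    coker φ b b' ≤ ⨆ a, φ a b * φ a b' := by
  obtain ⟨a, ha⟩ := h b
  have h1 : coker φ b b' ≤ res (φ a b) (φ a b') :=
    (iInf_le _ a).trans inf_le_left
  rw [ha] at h1
  have h2 : coker φ b b' ≤ φ a b' := aux_le_of_res_one h1
  calc coker φ b b' ≤ φ a b' := h2
    _ = φ a b * φ a b' := by rw [ha, one_mul]
    _ ≤ ⨆ a, φ a b * φ a b' := le_iSup (fun a => φ a b * φ a b') a

lemma aux_crispDesc_mem [Nonempty B] {φ : A → B → L} (h : IsLFun φ) :
    crispDesc φ ∈ CR φ := by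
  intro a
  unfold crispDesc
  rw [dif_pos (h a)]
  exact (h a).choose_spec

open Classical in
lemma aux_crisp_part [Nonempty B] {φ₁ φ₂ : A → B → L} (hCR : CR φ₁ ⊆ CR φ₂)
    (hLF : IsLFun φ₁) {a : A} {b : B} (hab : φ₁ a b = 1) : φ₂ a b = 1 := by
  classical
  set ψ : A → B := Function.update (crispDesc φ₁) a b with hψ
  have hmem : ψ ∈ CR φ₁ := by
    intro a'
    by_cases h' : a' = a
    · subst h'; simp [hψ, Function.update_self, hab]
    · rw [hψ, Function.update_of_ne h']
      exact aux_crispDesc_mem hLF a'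
  have := hCR hmem a
  simpa [hψ, Function.update_self] using this

end Aux

/-- Lemma on the ordering of uniform fuzzy relations -/
theorem uniform_le_tfae {L A B : Type*} [CompleteResiduatedLattice L]
    [Nonempty A] [Nonempty B] (φ₁ φ₂ : A → B → L)
    (h₁ : IsUniform φ₁) (h₂ : IsUniform φ₂) :
    List.TFAE
      [ φ₁ ≤ φ₂,
        inv φ₁ ≤ inv φ₂,
        CR φ₁ ⊆ CR φ₂ ∧ ker φ₁ ≤ ker φ₂,
        CR φ₁ ⊆ CR φ₂ ∧ coker φ₁ ≤ coker φ₂ ] := by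
  obtain ⟨hP₁, hL₁, hS₁⟩ := h₁
  obtain ⟨hP₂, hL₂, hS₂⟩ := h₂
  tfae_have 1 ↔ 2 := by
    constructor
    · intro h b a; exact h a b
    · intro h a b; exact h b a
  tfae_have 1 → 3 := by
    intro h
    refine ⟨fun ψ hψ a => le_antisymm (aux_le_one _) (by rw [← hψ a]; exact h a (ψ a)), ?_⟩
    intro a a'
    calc ker φ₁ a a' ≤ ⨆ b, φ₁ a b * φ₁ a' b := aux_ker_le_comp hL₁ a a'
      _ ≤ ⨆ b, φ₂ a b * φ₂ a' b := iSup_mono fun b => aux_mul_le_mul (h a b) (h a' b)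
      _ ≤ ker φ₂ a a' := aux_comp_le_ker hP₂ a a'
  tfae_have 1 → 4 := by
    intro h
    refine ⟨fun ψ hψ a => le_antisymm (aux_le_one _) (by rw [← hψ a]; exact h a (ψ a)), ?_⟩
    intro b b'
    calc coker φ₁ b b' ≤ ⨆ a, φ₁ a b * φ₁ a b' := aux_coker_le_comp hS₁ b b'
      _ ≤ ⨆ a, φ₂ a b * φ₂ a b' := iSup_mono fun a => aux_mul_le_mul (h a b) (h a b')
      _ ≤ coker φ₂ b b' := aux_comp_le_coker hP₂ b b'
  tfae_have 3 → 1 := by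
    rintro ⟨hCR, hker⟩ a b
    obtain ⟨a', ha'⟩ := hS₁ b
    have h2 : φ₂ a' b = 1 := aux_crisp_part hCR hL₁ ha'
    have step1 : φ₁ a b ≤ ker φ₁ a a' := by
      calc φ₁ a b = φ₁ a b * φ₁ a' b := by rw [ha', mul_one]
        _ ≤ ⨆ b, φ₁ a b * φ₁ a' b := le_iSup (fun b => φ₁ a b * φ₁ a' b) b
        _ ≤ ker φ₁ a a' := aux_comp_le_ker hP₁ a a'
    have step2 : ker φ₂ a a' ≤ φ₂ a b := by
      have h1 : ker φ₂ a a' ≤ CompleteResiduatedLattice.res (φ₂ a' b) (φ₂ a b) :=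
        (iInf_le _ b).trans inf_le_right
      rw [h2] at h1
      exact aux_le_of_res_one h1
    exact step1.trans ((hker a a').trans step2)
  tfae_have 4 → 1 := by
    rintro ⟨hCR, hcoker⟩ a b
    have hmem := aux_crispDesc_mem hL₁
    set ψ := crispDesc φ₁ with hψ
    have hψ₁ : φ₁ a (ψ a) = 1 := hmem a
    have hψ₂ : φ₂ a (ψ a) = 1 := hCR hmem a
    have step1 : φ₁ a b ≤ coker φ₁ (ψ a) b := by
      calc φ₁ a b = φ₁ a (ψ a) * φ₁ a b := by rw [hψ₁, one_mul]
        _ ≤ ⨆ a', φ₁ a' (ψ a) * φ₁ a' b := le_iSup (fun a' => φ₁ a' (ψ a) * φ₁ a' b) a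
        _ ≤ coker φ₁ (ψ a) b := aux_comp_le_coker hP₁ (ψ a) b
    have step2 : coker φ₂ (ψ a) b ≤ φ₂ a b := by
      have h1 : coker φ₂ (ψ a) b ≤ CompleteResiduatedLattice.res (φ₂ a (ψ a)) (φ₂ a b) :=
        (iInf_le _ a).trans inf_le_left
      rw [hψ₂] at h1
      exact aux_le_of_res_one h1
    exact step1.trans ((hcoker (ψ a) b).trans step2)
  tfae_finish


end FuzzyAutomataBisim
end

section
/- Let A, B and C be non-empty sets over a complete residuated lattice 𝓛, and let φ₁:A×B→L and φ₂:B×C→L be fuzzy relations. (a) If φ₁ and φ₂ are surjective 𝓛-functions, then φ₁∘φ₂ is a surjective 𝓛-function. (b) If φ₁ and φ₂ are uniform fuzzy relations such that E_B^{φ₁} ≤ E_B^{φ₂}, then φ₁∘φ₂ is a uniform fuzzy relation. -/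
universe u

namespace FuzzyAutomataBisim

variable {L X A B C : Type*} [CompleteResiduatedLattice L]

section Aux
variable {L : Type*} [CompleteResiduatedLattice L]

open CompleteResiduatedLattice

lemma le_res_iff {x y z : L} : x * y ≤ z ↔ x ≤ res y z := adjunction x y z

lemma crl_mul_le_of_le_res {x y z : L} (h : x ≤ res y z) : x * y ≤ z :=
  le_res_iff.2 h

lemma crl_mul_le_mul {x y x' y' : L} (hx : x ≤ x') (hy : y ≤ y') :
    x * y ≤ x' * y' := by
  have h1 : x * y ≤ x' * y := le_res_iff.2 (hx.trans (le_res_iff.1 le_rfl))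
  have h2 : x' * y ≤ x' * y' := by
    rw [mul_comm x' y, mul_comm x' y']
    exact le_res_iff.2 (hy.trans (le_res_iff.1 le_rfl))
  exact h1.trans h2

lemma crl_pff_bound {A B : Type*} {φ : A → B → L} (h : IsPFF φ)
    (a a' : A) (b b' : B) : φ a b * φ a' b * φ a' b' ≤ φ a b' := by
  have h1 : φ a b * φ a' b ≤ rcomp φ (inv φ) a a' :=
    le_iSup (fun b₀ => φ a b₀ * inv φ b₀ a') b
  have h2 : φ a b * φ a' b * φ a' b' ≤ rcomp (rcomp φ (inv φ)) φ a b' :=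
    le_trans (crl_mul_le_mul h1 le_rfl)
      (le_iSup (fun a₀ => rcomp φ (inv φ) a a₀ * φ a₀ b') a')
  exact h2.trans (h a b')

lemma crl_pff_coker {A B : Type*} {φ : A → B → L} (h : IsPFF φ)
    (a : A) (b b' : B) : φ a b * φ a b' ≤ coker φ b b' := by
  refine le_iInf fun a₀ => le_inf ?_ ?_
  · refine le_res_iff.1 ?_
    rw [mul_comm]
    calc φ a₀ b * (φ a b * φ a b') = φ a₀ b * φ a b * φ a b' := by ac_rfl
      _ ≤ φ a₀ b' := crl_pff_bound h a₀ a b b'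
  · refine le_res_iff.1 ?_
    rw [mul_comm]
    calc φ a₀ b' * (φ a b * φ a b') = φ a₀ b' * φ a b' * φ a b := by
          ac_rfl
      _ ≤ φ a₀ b := crl_pff_bound h a₀ a b' b

lemma crl_iSup_mul {ι : Sort*} (f : ι → L) (x : L) :
    (⨆ i, f i) * x = ⨆ i, f i * x :=
  le_antisymm (le_res_iff.2 (iSup_le fun i => le_res_iff.1 (le_iSup (fun i => f i * x) i)))
    (iSup_le fun i => crl_mul_le_mul (le_iSup f i) le_rfl)

lemma crl_mul_iSup {ι : Sort*} (x : L) (f : ι → L) :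
    x * ⨆ i, f i = ⨆ i, x * f i := by
  rw [mul_comm, crl_iSup_mul]; simp only [mul_comm]

end Aux

/-- Lemma on compositions of uniform fuzzy relations -/
theorem comp_uniform {L A B C : Type*} [CompleteResiduatedLattice L]
    [Nonempty A] [Nonempty B] [Nonempty C]
    (φ₁ : A → B → L) (φ₂ : B → C → L) :
    ((IsLFun φ₁ ∧ IsSurj φ₁) → (IsLFun φ₂ ∧ IsSurj φ₂) →
        IsLFun (rcomp φ₁ φ₂) ∧ IsSurj (rcomp φ₁ φ₂)) ∧
    (IsUniform φ₁ → IsUniform φ₂ → coker φ₁ ≤ ker φ₂ →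
        IsUniform (rcomp φ₁ φ₂)) := by
  constructor
  · rintro ⟨hL1, hS1⟩ ⟨hL2, hS2⟩
    constructor
    · intro a
      obtain ⟨b, hb⟩ := hL1 a
      obtain ⟨c, hc⟩ := hL2 b
      refine ⟨c, le_antisymm ?_ ?_⟩
      · rw [CompleteResiduatedLattice.one_eq_top]; exact le_top
      · calc (1 : L) = φ₁ a b * φ₂ b c := by rw [hb, hc, one_mul]
          _ ≤ rcomp φ₁ φ₂ a c := le_iSup (fun b₀ => φ₁ a b₀ * φ₂ b₀ c) b
    · intro c
      obtain ⟨b, hb⟩ := hS2 c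
      obtain ⟨a, ha⟩ := hS1 b
      refine ⟨a, le_antisymm ?_ ?_⟩
      · rw [CompleteResiduatedLattice.one_eq_top]; exact le_top
      · calc (1 : L) = φ₁ a b * φ₂ b c := by rw [ha, hb, one_mul]
          _ ≤ rcomp φ₁ φ₂ a c := le_iSup (fun b₀ => φ₁ a b₀ * φ₂ b₀ c) b
  · rintro ⟨hP1, hL1, hS1⟩ ⟨hP2, hL2, hS2⟩ hEB
    refine ⟨?_, ?_, ?_⟩
    · -- IsPFF (rcomp φ₁ φ₂)
      intro a c'
      simp only [rcomp, inv, crl_iSup_mul, crl_mul_iSup]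
      refine iSup_le fun a' => iSup_le fun c => iSup_le fun b => iSup_le fun b' =>
        iSup_le fun b'' => ?_
      have h1 : (φ₁ a' b' * φ₁ a' c) * φ₂ c c' ≤ φ₂ b' c' := by
        refine crl_mul_le_of_le_res ?_
        calc φ₁ a' b' * φ₁ a' c ≤ coker φ₁ b' c := crl_pff_coker hP1 a' b' c
          _ ≤ ker φ₂ b' c := hEB b' c
          _ ≤ bires (φ₂ b' c') (φ₂ c c') := iInf_le _ c'
          _ ≤ CompleteResiduatedLattice.res (φ₂ c c') (φ₂ b' c') := inf_le_right
      have h2 := crl_pff_bound hP2 b'' b' b c'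
      calc φ₁ a b'' * φ₂ b'' b * (φ₁ a' b' * φ₂ b' b) * (φ₁ a' c * φ₂ c c')
          = φ₁ a b'' * (φ₂ b'' b * φ₂ b' b * (φ₁ a' b' * φ₁ a' c * φ₂ c c')) := by
            ac_rfl
        _ ≤ φ₁ a b'' * (φ₂ b'' b * φ₂ b' b * φ₂ b' c') :=
            crl_mul_le_mul le_rfl (crl_mul_le_mul le_rfl h1)
        _ ≤ φ₁ a b'' * φ₂ b'' c' := crl_mul_le_mul le_rfl h2
        _ ≤ ⨆ b₀, φ₁ a b₀ * φ₂ b₀ c' := le_iSup (fun b₀ => φ₁ a b₀ * φ₂ b₀ c') b'' 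
    · intro a
      obtain ⟨b, hb⟩ := hL1 a
      obtain ⟨c, hc⟩ := hL2 b
      refine ⟨c, le_antisymm ?_ ?_⟩
      · rw [CompleteResiduatedLattice.one_eq_top]; exact le_top
      · calc (1 : L) = φ₁ a b * φ₂ b c := by rw [hb, hc, one_mul]
          _ ≤ rcomp φ₁ φ₂ a c := le_iSup (fun b₀ => φ₁ a b₀ * φ₂ b₀ c) b
    · intro c
      obtain ⟨b, hb⟩ := hS2 c
      obtain ⟨a, ha⟩ := hS1 b
      refine ⟨a, le_antisymm ?_ ?_⟩
      · rw [CompleteResiduatedLattice.one_eq_top]; exact le_top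
      · calc (1 : L) = φ₁ a b * φ₂ b c := by rw [ha, hb, one_mul]
          _ ≤ rcomp φ₁ φ₂ a c := le_iSup (fun b₀ => φ₁ a b₀ * φ₂ b₀ c) b


end FuzzyAutomataBisim
end

section
/- Let 𝓐=(A,δ^A,σ^A,τ^A), 𝓑=(B,δ^B,σ^B,τ^B) and 𝓒=(C,δ^C,σ^C,τ^C) be fuzzy automata over a complete residuated lattice 𝓛 and alphabet X, and let φ₁ be a forward bisimulation between 𝓐 and 𝓑 and φ₂ a forward bisimulation between 𝓑 and 𝓒. Then the composition φ₁∘φ₂ is a forward bisimulation between 𝓐 and 𝓒. -/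
universe u

namespace FuzzyAutomataBisim

variable {L X A B C : Type*} [CompleteResiduatedLattice L]

section Aux

variable {L : Type*} [CompleteResiduatedLattice L]

lemma mul_mono_right' {a y y' : L} (h : y ≤ y') : a * y ≤ a * y' := by
  rw [mul_comm a y, CompleteResiduatedLattice.adjunction]
  exact h.trans ((CompleteResiduatedLattice.adjunction _ _ _).1 (le_of_eq (mul_comm _ _)))

lemma mul_mono' {a a' b b' : L} (h1 : a ≤ a') (h2 : b ≤ b') : a * b ≤ a' * b' :=
  le_trans (mul_mono_right' h2)
    (by rw [mul_comm a b', mul_comm a' b']; exact mul_mono_right' h1)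

lemma mul_iSup' {ι : Sort*} (a : L) (f : ι → L) : a * (⨆ i, f i) = ⨆ i, a * f i := by
  have key : ∀ z : L, (a * ⨆ i, f i) ≤ z ↔ ∀ i, a * f i ≤ z := by
    intro z
    rw [mul_comm, CompleteResiduatedLattice.adjunction, iSup_le_iff]
    constructor
    · intro h i
      rw [mul_comm, CompleteResiduatedLattice.adjunction]
      exact h i
    · intro h i
      rw [← CompleteResiduatedLattice.adjunction, mul_comm]
      exact h i
  exact le_antisymm ((key _).2 fun i => le_iSup (fun i => a * f i) i)
    (iSup_le fun i => mul_mono_right' (le_iSup f i))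

lemma iSup_mul' {ι : Sort*} (f : ι → L) (a : L) : (⨆ i, f i) * a = ⨆ i, f i * a := by
  rw [mul_comm, mul_iSup']
  simp [mul_comm]

variable {X A B C D : Type*}

lemma inv_rcomp (φ : A → B → L) (ψ : B → C → L) :
    inv (rcomp φ ψ) = rcomp (inv ψ) (inv φ) := by
  funext c a
  simp [inv, rcomp, mul_comm]

lemma rcomp_assoc (φ : A → B → L) (ψ : B → C → L) (χ : C → D → L) :
    rcomp (rcomp φ ψ) χ = rcomp φ (rcomp ψ χ) := by
  funext a d
  simp only [rcomp, iSup_mul', mul_iSup', mul_assoc]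
  rw [iSup_comm]

lemma scomp_rcomp (f : A → L) (φ : A → B → L) (ψ : B → C → L) :
    scomp (scomp f φ) ψ = scomp f (rcomp φ ψ) := by
  funext c
  simp only [scomp, rcomp, iSup_mul', mul_iSup', mul_assoc]
  rw [iSup_comm]

lemma rscomp_rcomp (φ : A → B → L) (ψ : B → C → L) (g : C → L) :
    rscomp (rcomp φ ψ) g = rscomp φ (rscomp ψ g) := by
  funext a
  simp only [rscomp, rcomp, iSup_mul', mul_iSup', mul_assoc]
  rw [iSup_comm]

lemma rcomp_mono {φ φ' : A → B → L} {ψ ψ' : B → C → L} (h1 : φ ≤ φ') (h2 : ψ ≤ ψ') :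
    rcomp φ ψ ≤ rcomp φ' ψ' := fun a c =>
  iSup_mono fun b => mul_mono' (h1 a b) (h2 b c)

lemma scomp_mono {f f' : A → L} {φ φ' : A → B → L} (h1 : f ≤ f') (h2 : φ ≤ φ') :
    scomp f φ ≤ scomp f' φ' := fun b =>
  iSup_mono fun a => mul_mono' (h1 a) (h2 a b)

lemma rscomp_mono {φ φ' : A → B → L} {g g' : B → L} (h1 : φ ≤ φ') (h2 : g ≤ g') :
    rscomp φ g ≤ rscomp φ' g' := fun a =>
  iSup_mono fun b => mul_mono' (h1 a b) (h2 b)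

lemma comp_forwardSim {MA : FuzzyAutomaton L X A} {MB : FuzzyAutomaton L X B}
    {MC : FuzzyAutomaton L X C} {φ₁ : A → B → L} {φ₂ : B → C → L}
    (h₁ : IsForwardSim MA MB φ₁) (h₂ : IsForwardSim MB MC φ₂) :
    IsForwardSim MA MC (rcomp φ₁ φ₂) := by
  obtain ⟨s1, d1, t1⟩ := h₁
  obtain ⟨s2, d2, t2⟩ := h₂
  rw [IsForwardSim, inv_rcomp]
  refine ⟨?_, ?_, ?_⟩
  · calc MA.σ ≤ scomp MB.σ (inv φ₁) := s1
      _ ≤ scomp (scomp MC.σ (inv φ₂)) (inv φ₁) := scomp_mono s2 le_rfl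
      _ = scomp MC.σ (rcomp (inv φ₂) (inv φ₁)) := scomp_rcomp _ _ _
  · intro x
    calc rcomp (rcomp (inv φ₂) (inv φ₁)) (MA.δx x)
        = rcomp (inv φ₂) (rcomp (inv φ₁) (MA.δx x)) := rcomp_assoc _ _ _
      _ ≤ rcomp (inv φ₂) (rcomp (MB.δx x) (inv φ₁)) := rcomp_mono le_rfl (d1 x)
      _ = rcomp (rcomp (inv φ₂) (MB.δx x)) (inv φ₁) := (rcomp_assoc _ _ _).symm
      _ ≤ rcomp (rcomp (MC.δx x) (inv φ₂)) (inv φ₁) := rcomp_mono (d2 x) le_rfl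
      _ = rcomp (MC.δx x) (rcomp (inv φ₂) (inv φ₁)) := rcomp_assoc _ _ _
  · calc rscomp (rcomp (inv φ₂) (inv φ₁)) MA.τ
        = rscomp (inv φ₂) (rscomp (inv φ₁) MA.τ) := rscomp_rcomp _ _ _
      _ ≤ rscomp (inv φ₂) MB.τ := rscomp_mono le_rfl t1
      _ ≤ MC.τ := t2

end Aux

/-- composition of forward bisimulations -/
theorem comp_forwardBisim {L X A B C : Type*} [CompleteResiduatedLattice L]
    [Nonempty A] [Nonempty B] [Nonempty C]
    (MA : FuzzyAutomaton L X A) (MB : FuzzyAutomaton L X B) (MC : FuzzyAutomaton L X C)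
    (φ₁ : A → B → L) (φ₂ : B → C → L)
    (h₁ : IsForwardBisim MA MB φ₁) (h₂ : IsForwardBisim MB MC φ₂) :
    IsForwardBisim MA MC (rcomp φ₁ φ₂) := by
  refine ⟨comp_forwardSim h₁.1 h₂.1, ?_⟩
  rw [inv_rcomp]
  exact comp_forwardSim h₂.2 h₁.2

end FuzzyAutomataBisim
end
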